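/- arXiv:2311.09982 — 2 statements merged into one kernel-verified Lean document; each statement's English description precedes it below -/
import Mathlib

section
/- Let p ∈ (1, ∞) and let f : ℝ → ℝ be locally absolutely continuous with derivative f' ∈ L^{p,∞}(ℝ). Then f is Hölder continuous with exponent 1/p': for all x, x' ∈ ℝ, |f(x) − f(x')| ≤ p' ‖f'‖_{p,∞} |x − x'|^{1/p'}. -/
/-!
A weak-`L^p` function satisfies `|{|g| > α}| ≤ (‖g‖_{p,∞} / α)^p`: if `|{|g| > α}| > s`, then
`g*(r) ≥ α` for `r ≤ s`, so `g**(s) ≥ α` and `s^{1/p} α ≤ ‖g‖_{p,∞}`. By the layer-cake formula,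
on a set `E` of measure `s`,
`∫_E |g| = ∫₀^∞ |E ∩ {|g| > α}| dα ≤ ∫₀^∞ min(s, (‖g‖_{p,∞} / α)^p) dα = p' ‖g‖_{p,∞} s^{1/p'}`,
and `|f x - f x'|` is at most the integral of `|g|` over the interval between `x` and `x'`.
-/

open MeasureTheory Set
open scoped ENNReal NNReal Real

/-- The distribution function of `f`: the Lebesgue measure of `{x : α < |f x|}`. -/
noncomputable def distrib (f : ℝ → ℝ) (α : ℝ) : ℝ≥0∞ := volume {x : ℝ | α < |f x|}

/-- The decreasing rearrangement `f*(s) = inf {α > 0 : Leb {|f| > α} ≤ s}`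
(equal to `∞` if there is no such `α`). -/
noncomputable def decRearr (f : ℝ → ℝ) (s : ℝ) : ℝ≥0∞ :=
  ⨅ (α : ℝ) (_ : 0 < α ∧ distrib f α ≤ ENNReal.ofReal s), ENNReal.ofReal α

/-- The maximal function of the decreasing rearrangement,
`f**(s) = (1/s) ∫₀^s f*(r) dr`. -/
noncomputable def maxRearr (f : ℝ → ℝ) (s : ℝ) : ℝ≥0∞ :=
  (ENNReal.ofReal s)⁻¹ * ∫⁻ r in Set.Ioc (0:ℝ) s, decRearr f r

/-- The Lorentz norm `‖f‖_{p,q}`: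
`(∫₀^∞ (s^{1/p} f**(s))^q ds/s)^{1/q}` for `q < ∞`, and
`sup_{s>0} s^{1/p} f**(s)` for `q = ∞`. -/
noncomputable def lorentzNorm (f : ℝ → ℝ) (p q : ℝ≥0∞) : ℝ≥0∞ :=
  if q = ∞ then ⨆ (s : ℝ) (_ : 0 < s), ENNReal.ofReal s ^ p⁻¹.toReal * maxRearr f s
  else (∫⁻ s in Set.Ioi (0:ℝ),
          (ENNReal.ofReal s ^ p⁻¹.toReal * maxRearr f s) ^ q.toReal
            * (ENNReal.ofReal s)⁻¹) ^ q⁻¹.toReal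


section Rearrangement

variable {f : ℝ → ℝ}

lemma distrib_antitone : Antitone (distrib f) :=
  fun _ _ hαβ => measure_mono fun _ hx => lt_of_le_of_lt hαβ hx

lemma ofReal_le_decRearr {α r : ℝ} (h : ENNReal.ofReal r < distrib f α) :
    ENNReal.ofReal α ≤ decRearr f r := by
  refine le_iInf₂ fun β hβ => ENNReal.ofReal_le_ofReal ?_
  by_contra! hβα
  exact h.not_ge ((distrib_antitone hβα.le).trans hβ.2)

lemma ofReal_le_maxRearr {α s : ℝ} (hs : 0 < s) (h : ENNReal.ofReal s < distrib f α) :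
    ENNReal.ofReal α ≤ maxRearr f s := by
  have hdec : ∀ r ∈ Ioc (0 : ℝ) s, ENNReal.ofReal α ≤ decRearr f r := fun r hr =>
    ofReal_le_decRearr ((ENNReal.ofReal_le_ofReal hr.2).trans_lt h)
  have hint : ENNReal.ofReal s * ENNReal.ofReal α ≤ ∫⁻ r in Ioc (0 : ℝ) s, decRearr f r := by
    calc ENNReal.ofReal s * ENNReal.ofReal α = ∫⁻ _ in Ioc (0 : ℝ) s, ENNReal.ofReal α := by
          rw [setLIntegral_const, Real.volume_Ioc, sub_zero, mul_comm]
      _ ≤ _ := setLIntegral_mono' measurableSet_Ioc hdec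
  rw [maxRearr]
  exact (ENNReal.mul_le_iff_le_inv (ENNReal.ofReal_pos.mpr hs).ne' ENNReal.ofReal_ne_top).mp hint

lemma rpow_mul_maxRearr_le_lorentzNorm (p : ℝ≥0∞) {s : ℝ} (hs : 0 < s) :
    ENNReal.ofReal s ^ p⁻¹.toReal * maxRearr f s ≤ lorentzNorm f p ∞ := by
  rw [lorentzNorm, if_pos rfl]
  exact le_iSup₂ (f := fun s (_ : 0 < s) => ENNReal.ofReal s ^ p⁻¹.toReal * maxRearr f s) s hs

lemma distrib_le_lorentzNorm_div_rpow {p : ℝ} (hp : 0 < p)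
    (hf : lorentzNorm f (ENNReal.ofReal p) ∞ ≠ ∞) {α : ℝ} (hα : 0 < α) :
    distrib f α ≤ ENNReal.ofReal (((lorentzNorm f (ENNReal.ofReal p) ∞).toReal / α) ^ p) := by
  set M := (lorentzNorm f (ENNReal.ofReal p) ∞).toReal
  by_contra! hlt
  obtain ⟨s, -, hMs, hs⟩ := ENNReal.lt_iff_exists_real_btwn.mp hlt
  obtain ⟨hMs, hs0⟩ := ENNReal.ofReal_lt_ofReal_iff'.mp hMs
  have hnorm : ENNReal.ofReal (s ^ p⁻¹ * α) ≤ ENNReal.ofReal M := by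
    rw [ENNReal.ofReal_toReal hf, ENNReal.ofReal_mul (by positivity),
      ← ENNReal.ofReal_rpow_of_pos hs0]
    have := rpow_mul_maxRearr_le_lorentzNorm (f := f) (ENNReal.ofReal p) hs0
    rw [ENNReal.toReal_inv, ENNReal.toReal_ofReal hp.le] at this
    exact (mul_le_mul_right (ofReal_le_maxRearr hs0 hs) _).trans this
  have hsM : s ^ p⁻¹ ≤ M / α :=
    (le_div_iff₀ hα).mpr ((ENNReal.ofReal_le_ofReal_iff ENNReal.toReal_nonneg).mp hnorm)
  refine hMs.not_ge ?_
  calc s = (s ^ p⁻¹) ^ p := (Real.rpow_inv_rpow hs0.le hp.ne').symm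
    _ ≤ (M / α) ^ p := by gcongr

end Rearrangement

lemma setLIntegral_ofReal_abs_le {g : ℝ → ℝ} (hg : Measurable g) {E : Set ℝ}
    (hE : MeasurableSet E) :
    ∫⁻ t in E, ENNReal.ofReal |g t| ≤ ∫⁻ α in Ioi 0, min (volume E) (distrib g α) := by
  rw [lintegral_eq_lintegral_meas_lt _ (.of_forall fun t => abs_nonneg _)
    hg.abs.aemeasurable]
  refine setLIntegral_mono' measurableSet_Ioi fun α _ => ?_
  rw [Measure.restrict_apply' hE]
  exact le_min (measure_mono inter_subset_right) (measure_mono inter_subset_left)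

lemma lintegral_Ioi_ofReal_div_rpow {p : ℝ} (hp : 1 < p) {M a : ℝ} (hM : 0 ≤ M) (ha : 0 < a) :
    ∫⁻ α in Ioi a, ENNReal.ofReal ((M / α) ^ p) =
      ENNReal.ofReal (M ^ p * a ^ (1 - p) / (p - 1)) := by
  have hpow : EqOn (fun α => (M / α) ^ p) (fun α => M ^ p * α ^ (-p)) (Ioi a) := fun α hα => by
    have hα : 0 < α := ha.trans hα
    show (M / α) ^ p = M ^ p * α ^ (-p)
    rw [Real.div_rpow hM hα.le, Real.rpow_neg hα.le, div_eq_mul_inv]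
  have hint : IntegrableOn (fun α : ℝ => M ^ p * α ^ (-p)) (Ioi a) :=
    (integrableOn_Ioi_rpow_of_lt (by linarith) ha).const_mul _
  rw [setLIntegral_congr_fun measurableSet_Ioi fun α hα => congrArg ENNReal.ofReal (hpow hα),
    ← ofReal_integral_eq_lintegral_ofReal hint, integral_const_mul,
    integral_Ioi_rpow_of_lt (by linarith) ha]
  · rw [show -p + 1 = 1 - p by ring, ← neg_div_neg_eq, neg_neg, neg_sub, mul_div_assoc]
  · filter_upwards [self_mem_ae_restrict measurableSet_Ioi] with α hα
    have : 0 < α := ha.trans hα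
    positivity

-- Split at `α₀ = M s^{-1/p}`, where `(M/α₀)^p = s`.
lemma lintegral_min_ofReal_div_rpow_le {p : ℝ} (hp : 1 < p) {M s : ℝ} (hM : 0 ≤ M)
    (hs : 0 ≤ s) :
    ∫⁻ α in Ioi 0, min (ENNReal.ofReal s) (ENNReal.ofReal ((M / α) ^ p)) ≤
      ENNReal.ofReal (p / (p - 1) * M * s ^ (1 - 1 / p)) := by
  rcases hM.eq_or_lt with rfl | hM
  · simp [Real.zero_rpow (by linarith : p ≠ 0)]
  rcases hs.eq_or_lt with rfl | hs
  · simp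
  set α₀ := M * s ^ (-1 / p)
  have hα₀ : 0 < α₀ := by positivity
  have hhead : s * α₀ = M * s ^ (1 - 1 / p) := by
    rw [show 1 - 1 / p = 1 + -1 / p by ring, Real.rpow_add hs, Real.rpow_one]
    ring
  have htail : M ^ p * α₀ ^ (1 - p) = M * s ^ (1 - 1 / p) := by
    rw [Real.mul_rpow hM.le (by positivity), ← mul_assoc, ← Real.rpow_add hM, ← Real.rpow_mul hs.le]
    congr 2
    · ring_nf; exact Real.rpow_one M
    · field_simp
      ring
  rw [← Ioc_union_Ioi_eq_Ioi hα₀.le, lintegral_union measurableSet_Ioi (Ioc_disjoint_Ioi le_rfl)]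
  calc _ ≤ (∫⁻ _ in Ioc 0 α₀, ENNReal.ofReal s) + ∫⁻ α in Ioi α₀, ENNReal.ofReal ((M / α) ^ p) :=
        add_le_add (lintegral_mono fun _ => min_le_left _ _)
          (lintegral_mono fun _ => min_le_right _ _)
    _ = ENNReal.ofReal (M * s ^ (1 - 1 / p)) + ENNReal.ofReal (M * s ^ (1 - 1 / p) / (p - 1)) := by
        rw [setLIntegral_const, Real.volume_Ioc, sub_zero, ← ENNReal.ofReal_mul hs.le, hhead,
          lintegral_Ioi_ofReal_div_rpow hp hM.le hα₀, htail]
    _ = ENNReal.ofReal (p / (p - 1) * M * s ^ (1 - 1 / p)) := by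
        have hp1 : 0 < p - 1 := by linarith
        rw [← ENNReal.ofReal_add (by positivity) (by positivity)]
        congr 1
        field_simp
        ring

lemma setLIntegral_ofReal_abs_le_lorentzNorm {p : ℝ} (hp : 1 < p) {g : ℝ → ℝ}
    (hg : Measurable g) (hfin : lorentzNorm g (ENNReal.ofReal p) ∞ ≠ ∞) {E : Set ℝ}
    (hE : MeasurableSet E) (hE' : volume E ≠ ∞) :
    ∫⁻ t in E, ENNReal.ofReal |g t| ≤ ENNReal.ofReal (p / (p - 1) *
      (lorentzNorm g (ENNReal.ofReal p) ∞).toReal * (volume E).toReal ^ (1 - 1 / p)) := by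
  calc _ ≤ ∫⁻ α in Ioi 0, min (volume E) (distrib g α) := setLIntegral_ofReal_abs_le hg hE
    _ ≤ ∫⁻ α in Ioi 0, min (ENNReal.ofReal (volume E).toReal)
          (ENNReal.ofReal (((lorentzNorm g (ENNReal.ofReal p) ∞).toReal / α) ^ p)) := by
        refine setLIntegral_mono' measurableSet_Ioi fun α hα => ?_
        rw [ENNReal.ofReal_toReal hE']
        exact min_le_min_left _ (distrib_le_lorentzNorm_div_rpow (by linarith) hfin hα)
    _ ≤ _ := lintegral_min_ofReal_div_rpow_le hp ENNReal.toReal_nonneg ENNReal.toReal_nonneg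

theorem stmt1_general (p : ℝ) (hp : 1 < p) (f g : ℝ → ℝ)
    (hg_meas : Measurable g)
    (hrep : ∀ x y : ℝ, f y - f x = ∫ t in x..y, g t)
    (hfin : lorentzNorm g (ENNReal.ofReal p) ∞ ≠ ∞) :
    ∀ x x' : ℝ, |f x - f x'| ≤
      (p / (p - 1)) * (lorentzNorm g (ENNReal.ofReal p) ∞).toReal * |x - x'| ^ (1 - 1/p) := by
  intro x x'
  have hbound := setLIntegral_ofReal_abs_le_lorentzNorm hp hg_meas hfin measurableSet_uIoc
    (by simp [Real.volume_uIoc] : volume (uIoc x' x) ≠ ∞)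
  rw [Real.volume_uIoc, ENNReal.toReal_ofReal (abs_nonneg _)] at hbound
  have hp1 : 0 < p - 1 := by linarith
  calc |f x - f x'| = ‖∫ t in uIoc x' x, g t‖ := by
        rw [hrep x' x, ← intervalIntegral.norm_integral_eq_norm_integral_uIoc, Real.norm_eq_abs]
    _ ≤ (∫⁻ t in uIoc x' x, ENNReal.ofReal ‖g t‖).toReal := norm_integral_le_lintegral_norm _
    _ ≤ _ := ENNReal.toReal_le_of_le_ofReal (by positivity) (by simpa using hbound)

/-- If `f : ℝ → ℝ` is locally absolutely continuous with derivative `g = f'` in weak-`L^p`,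
`p ∈ (1,∞)`, then `f` is `1/p'`-Hölder continuous:
`|f x − f x'| ≤ p' ‖f'‖_{p,∞} |x − x'|^{1/p'}`, where `1/p + 1/p' = 1`. -/
theorem stmt1 (p : ℝ) (hp : 1 < p) (f g : ℝ → ℝ)
    (hg_meas : Measurable g)
    (hg_loc : LocallyIntegrable g volume)
    (hrep : ∀ x y : ℝ, f y - f x = ∫ t in x..y, g t)
    (hfin : lorentzNorm g (ENNReal.ofReal p) ∞ ≠ ∞) :
    ∀ x x' : ℝ, |f x - f x'| ≤
      (p / (p - 1)) * (lorentzNorm g (ENNReal.ofReal p) ∞).toReal * |x - x'| ^ (1 - 1/p) :=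
  stmt1_general p hp f g hg_meas hrep hfin
end

section
/- (Existence of stationary solutions in the subcritical case.) (1) Let p ∈ (2, ∞] and 0 < k < 1 − 1/p; define u(x) = (1 + x²)^{−(1 − 1/p)/(2k)} and b(x) = −((1 − 1/p)/k) · x · (1 + x²)^{−(1 + 1/p)/2}. Then u ∈ L¹(ℝ), b ∈ L^{p,∞}(ℝ), and u is a stationary solution of the PDE: (b(x) u(x)^{1+k})' = u''(x) for all x ∈ ℝ. (2) Similarly, let p ∈ (1, ∞] and 0 < k < 2 − 1/p; define u(x) = (1 + x²)^{−(2 − 1/p)/(2k)} and b(x) = −((2 − 1/p)/k) · x · (1 + x²)^{−1/(2p)}. Then u ∈ L¹(ℝ), b' ∈ L^{p,∞}(ℝ), and (b(x) u(x)^{1+k})' = u''(x) for all x ∈ ℝ. -/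
open MeasureTheory Set
open scoped ENNReal NNReal Real

/-! With `u = (1 + x²)^(-c)` and `b = -2c x (1 + x²)^(-e)`, the relation `c k + e = 1` makes
`b u^{1+k}` equal to `u'` itself, so the stationary equation holds before differentiating once more;
`u ∈ L¹` because `2c > 1`. In part (1) the drift, in part (2) its derivative, is bounded by a
multiple of `|x|^{-1/p}`, and every such function lies in `L^{p,∞}`: its level set at height
`≈ r^{-1/p}` lies in an interval of length `r`, so `f*(r) ≲ r^{-1/p}` and `s^{1/p} f**(s)` stays
bounded. -/

section Profile

theorem integrable_one_add_sq_rpow_neg {c : ℝ} (hc : 1 / 2 < c) :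
    Integrable (fun x : ℝ => (1 + x ^ 2) ^ (-c)) volume := by
  have h := integrable_rpow_neg_one_add_norm_sq (E := ℝ) (μ := volume) (r := 2 * c)
    (by simp only [Module.finrank_self, Nat.cast_one]; linarith)
  convert h using 2 with x
  rw [Real.norm_eq_abs, sq_abs]
  ring_nf

theorem hasDerivAt_one_add_sq_rpow_neg (c x : ℝ) :
    HasDerivAt (fun y : ℝ => (1 + y ^ 2) ^ (-c)) (-(2 * c) * x * (1 + x ^ 2) ^ (-c - 1)) x := by
  have h := ((hasDerivAt_pow 2 x).const_add 1).rpow_const (p := -c) (Or.inl (by positivity))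
  convert h using 1
  push_cast
  ring

theorem drift_mul_rpow_eq_deriv {a c k e : ℝ} (ha : a = 2 * c) (he : c * k + e = 1) :
    (fun y : ℝ => (-a * y * (1 + y ^ 2) ^ (-e)) * ((1 + y ^ 2) ^ (-c)) ^ (1 + k))
      = deriv (fun y : ℝ => (1 + y ^ 2) ^ (-c)) := by
  funext y
  have hpos : (0 : ℝ) < 1 + y ^ 2 := by positivity
  rw [(hasDerivAt_one_add_sq_rpow_neg c y).deriv, ← Real.rpow_mul hpos.le, mul_assoc,
    ← Real.rpow_add hpos, ha]
  congr 2
  linear_combination -he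

theorem one_add_sq_rpow_neg_le_abs_rpow {x : ℝ} (hx : x ≠ 0) {e : ℝ} (he : 0 ≤ e) :
    (1 + x ^ 2) ^ (-e) ≤ |x| ^ (-(2 * e)) := by
  have hsq : (x ^ 2) ^ (-e) = |x| ^ (-(2 * e)) := by
    rw [← sq_abs, ← Real.rpow_natCast |x| 2, ← Real.rpow_mul (abs_nonneg x)]
    norm_num
  rw [← hsq]
  exact Real.rpow_le_rpow_of_nonpos (by positivity) (by linarith) (by linarith)

end Profile

section WeakLp

variable {f : ℝ → ℝ} {C t : ℝ}

theorem distrib_le_of_abs_le_mul_abs_rpow (hC : 0 ≤ C) (ht : 0 ≤ t)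
    (hf : ∀ x ≠ 0, |f x| ≤ C * |x| ^ (-t)) {r : ℝ} (hr : 0 < r) :
    distrib f (C * 2 ^ t * r ^ (-t)) ≤ ENNReal.ofReal r := by
  have hsub : {x : ℝ | C * 2 ^ t * r ^ (-t) < |f x|} ⊆ Ioo (-(r / 2)) (r / 2) := by
    intro x hx
    rw [mem_Ioo, ← abs_lt]
    by_contra! hxr
    have hx0 : x ≠ 0 := by rintro rfl; rw [abs_zero] at hxr; linarith
    have hhalf : (r / 2) ^ (-t) = 2 ^ t * r ^ (-t) := by
      rw [Real.div_rpow hr.le zero_le_two, Real.rpow_neg zero_le_two, div_inv_eq_mul, mul_comm]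
    have hdecay : |x| ^ (-t) ≤ (r / 2) ^ (-t) :=
      Real.rpow_le_rpow_of_nonpos (by linarith) hxr (by linarith)
    have := mul_le_mul_of_nonneg_left hdecay hC
    rw [hhalf, ← mul_assoc] at this
    exact absurd ((hf x hx0).trans this) (not_le.2 hx)
  calc distrib f (C * 2 ^ t * r ^ (-t)) ≤ volume (Ioo (-(r / 2)) (r / 2)) := measure_mono hsub
    _ = ENNReal.ofReal r := by rw [Real.volume_Ioo]; ring_nf

theorem decRearr_le_of_abs_le_mul_abs_rpow (hC : 0 < C) (ht : 0 ≤ t)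
    (hf : ∀ x ≠ 0, |f x| ≤ C * |x| ^ (-t)) {r : ℝ} (hr : 0 < r) :
    decRearr f r ≤ ENNReal.ofReal (C * 2 ^ t * r ^ (-t)) :=
  iInf₂_le _ ⟨by positivity, distrib_le_of_abs_le_mul_abs_rpow hC.le ht hf hr⟩

theorem integral_Ioc_rpow_neg {s : ℝ} (hs : 0 < s) (ht : t < 1) :
    ∫ r in Ioc (0 : ℝ) s, r ^ (-t) = s ^ (1 - t) / (1 - t) := by
  rw [← intervalIntegral.integral_of_le hs.le, integral_rpow (Or.inl (by linarith)),
    Real.zero_rpow (by linarith), neg_add_eq_sub]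
  ring

theorem lintegral_decRearr_le_of_abs_le_mul_abs_rpow (hC : 0 < C) (ht0 : 0 ≤ t) (ht1 : t < 1)
    (hf : ∀ x ≠ 0, |f x| ≤ C * |x| ^ (-t)) {s : ℝ} (hs : 0 < s) :
    ∫⁻ r in Ioc (0 : ℝ) s, decRearr f r ≤ ENNReal.ofReal (C * 2 ^ t * (s ^ (1 - t) / (1 - t))) := by
  have hint : IntegrableOn (fun r : ℝ => C * 2 ^ t * r ^ (-t)) (Ioc 0 s) volume := by
    have h := (intervalIntegral.intervalIntegrable_rpow' (a := 0) (b := s)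
      (r := -t) (by linarith)).const_mul (C * 2 ^ t)
    rwa [intervalIntegrable_iff_integrableOn_Ioc_of_le hs.le] at h
  calc ∫⁻ r in Ioc (0 : ℝ) s, decRearr f r
      ≤ ∫⁻ r in Ioc (0 : ℝ) s, ENNReal.ofReal (C * 2 ^ t * r ^ (-t)) :=
        setLIntegral_mono (by fun_prop)
          fun r hr => decRearr_le_of_abs_le_mul_abs_rpow hC ht0 hf hr.1
    _ = ENNReal.ofReal (∫ r in Ioc (0 : ℝ) s, C * 2 ^ t * r ^ (-t)) := by
        rw [← ofReal_integral_eq_lintegral_ofReal hint]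
        filter_upwards [ae_restrict_mem measurableSet_Ioc] with r hr
        have : 0 < r := hr.1
        positivity
    _ = ENNReal.ofReal (C * 2 ^ t * (s ^ (1 - t) / (1 - t))) := by
        rw [integral_const_mul, integral_Ioc_rpow_neg hs ht1]

theorem rpow_mul_maxRearr_le_of_abs_le_mul_abs_rpow (hC : 0 < C) (ht0 : 0 ≤ t) (ht1 : t < 1)
    (hf : ∀ x ≠ 0, |f x| ≤ C * |x| ^ (-t)) {s : ℝ} (hs : 0 < s) :
    ENNReal.ofReal s ^ t * maxRearr f s ≤ ENNReal.ofReal (C * 2 ^ t / (1 - t)) := by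
  have hsimp : s ^ t * (s⁻¹ * (C * 2 ^ t * (s ^ (1 - t) / (1 - t)))) = C * 2 ^ t / (1 - t) := by
    rw [Real.rpow_sub hs, Real.rpow_one]
    field_simp
  calc ENNReal.ofReal s ^ t * maxRearr f s
      ≤ ENNReal.ofReal s ^ t
          * (ENNReal.ofReal s⁻¹ * ENNReal.ofReal (C * 2 ^ t * (s ^ (1 - t) / (1 - t)))) := by
        rw [maxRearr, ENNReal.ofReal_inv_of_pos hs]
        gcongr
        exact lintegral_decRearr_le_of_abs_le_mul_abs_rpow hC ht0 ht1 hf hs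
    _ = ENNReal.ofReal (C * 2 ^ t / (1 - t)) := by
        rw [ENNReal.ofReal_rpow_of_pos hs, ← ENNReal.ofReal_mul (by positivity),
          ← ENNReal.ofReal_mul (by positivity), hsimp]

theorem lorentzNorm_top_ne_top_of_abs_le_mul_abs_rpow {p : ℝ≥0∞} (hC : 0 < C)
    (hp : p⁻¹.toReal < 1) (hf : ∀ x ≠ 0, |f x| ≤ C * |x| ^ (-p⁻¹.toReal)) :
    lorentzNorm f p ∞ ≠ ∞ := by
  rw [lorentzNorm, if_pos rfl]
  refine ne_top_of_le_ne_top (ENNReal.ofReal_ne_top (r := C * 2 ^ p⁻¹.toReal / (1 - p⁻¹.toReal)))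
    (iSup₂_le fun s hs => ?_)
  exact rpow_mul_maxRearr_le_of_abs_le_mul_abs_rpow hC ENNReal.toReal_nonneg hp hf hs

end WeakLp

section Drift

variable {a t x : ℝ}

theorem abs_drift_le (ht : 0 ≤ t) (hx : x ≠ 0) :
    |-a * x * (1 + x ^ 2) ^ (-((1 + t) / 2))| ≤ |a| * |x| ^ (-t) := by
  have hdecay := one_add_sq_rpow_neg_le_abs_rpow hx (e := (1 + t) / 2) (by linarith)
  have hpow : |x| * |x| ^ (-(2 * ((1 + t) / 2))) = |x| ^ (-t) := by
    conv_lhs => enter [1]; rw [← Real.rpow_one |x|]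
    rw [← Real.rpow_add (abs_pos.2 hx)]
    ring_nf
  rw [abs_mul, abs_mul, abs_neg, abs_of_pos (Real.rpow_pos_of_pos (by positivity) _), mul_assoc,
    ← hpow]
  gcongr

theorem hasDerivAt_drift (a t x : ℝ) :
    HasDerivAt (fun y : ℝ => -a * y * (1 + y ^ 2) ^ (-(t / 2)))
      (-a * (1 + x ^ 2) ^ (-(t / 2) - 1) * (1 + (1 - t) * x ^ 2)) x := by
  have hpos : (0 : ℝ) < 1 + x ^ 2 := by positivity
  have hlin : HasDerivAt (fun y : ℝ => -a * y) (-a) x := by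
    simpa using (hasDerivAt_id x).const_mul (-a)
  have hpow := ((hasDerivAt_pow 2 x).const_add 1).rpow_const (p := -(t / 2)) (Or.inl hpos.ne')
  refine (hlin.mul hpow).congr_deriv ?_
  rw [show -(t / 2) = -(t / 2) - 1 + 1 by ring, Real.rpow_add hpos, Real.rpow_one]
  push_cast
  ring_nf

theorem abs_deriv_drift_le (ht0 : 0 ≤ t) (ht1 : t ≤ 1) (hx : x ≠ 0) :
    |deriv (fun y : ℝ => -a * y * (1 + y ^ 2) ^ (-(t / 2))) x| ≤ |a| * |x| ^ (-t) := by
  have hpos : (0 : ℝ) < 1 + x ^ 2 := by positivity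
  have hfactor : 1 + (1 - t) * x ^ 2 ≤ (1 + x ^ 2) ^ (1 : ℝ) := by
    rw [Real.rpow_one]; nlinarith [sq_nonneg x]
  have hdecay := one_add_sq_rpow_neg_le_abs_rpow hx (e := t / 2) (by linarith)
  rw [(hasDerivAt_drift a t x).deriv, abs_mul, abs_mul, abs_neg,
    abs_of_pos (Real.rpow_pos_of_pos hpos _), abs_of_pos (show 0 < 1 + (1 - t) * x ^ 2 by nlinarith [mul_nonneg (sub_nonneg.2 ht1) (sq_nonneg x)]),
    mul_assoc]
  gcongr
  calc (1 + x ^ 2) ^ (-(t / 2) - 1) * (1 + (1 - t) * x ^ 2)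
      ≤ (1 + x ^ 2) ^ (-(t / 2) - 1) * (1 + x ^ 2) ^ (1 : ℝ) := by gcongr
    _ = (1 + x ^ 2) ^ (-(t / 2)) := by rw [← Real.rpow_add hpos]; ring_nf
    _ ≤ |x| ^ (-t) := by rwa [show -(2 * (t / 2)) = -t by ring] at hdecay

end Drift

/-- Existence of stationary solutions in the subcritical case.
(1) For `p ∈ (2,∞]`, `0 < k < 1 − 1/p`, the function `u(x) = (1+x²)^{−(1−1/p)/(2k)}`
is integrable, the drift `b(x) = −((1−1/p)/k) x (1+x²)^{−(1+1/p)/2}` is in `L^{p,∞}`,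
and `(b u^{1+k})' = u''` everywhere.
(2) For `p ∈ (1,∞]`, `0 < k < 2 − 1/p`, the function `u(x) = (1+x²)^{−(2−1/p)/(2k)}`
is integrable, the drift `b(x) = −((2−1/p)/k) x (1+x²)^{−1/(2p)}` has `b' ∈ L^{p,∞}`,
and `(b u^{1+k})' = u''` everywhere. -/
theorem stmt18 :
    (∀ p : ℝ≥0∞, 2 < p → ∀ k : ℝ, 0 < k → k < 1 - p⁻¹.toReal →
      Integrable (fun x : ℝ => (1 + x^2) ^ (-((1 - p⁻¹.toReal)/(2*k)))) volume ∧
      lorentzNorm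
        (fun x : ℝ => -((1 - p⁻¹.toReal)/k) * x * (1 + x^2) ^ (-((1 + p⁻¹.toReal)/2)))
        p ∞ ≠ ∞ ∧
      ∀ x : ℝ,
        deriv (fun y : ℝ =>
            (-((1 - p⁻¹.toReal)/k) * y * (1 + y^2) ^ (-((1 + p⁻¹.toReal)/2)))
              * ((1 + y^2) ^ (-((1 - p⁻¹.toReal)/(2*k)))) ^ (1 + k)) x
          = deriv (deriv (fun y : ℝ => (1 + y^2) ^ (-((1 - p⁻¹.toReal)/(2*k))))) x) ∧
    (∀ p : ℝ≥0∞, 1 < p → ∀ k : ℝ, 0 < k → k < 2 - p⁻¹.toReal →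
      Integrable (fun x : ℝ => (1 + x^2) ^ (-((2 - p⁻¹.toReal)/(2*k)))) volume ∧
      lorentzNorm
        (deriv (fun x : ℝ => -((2 - p⁻¹.toReal)/k) * x * (1 + x^2) ^ (-(p⁻¹.toReal/2))))
        p ∞ ≠ ∞ ∧
      ∀ x : ℝ,
        deriv (fun y : ℝ =>
            (-((2 - p⁻¹.toReal)/k) * y * (1 + y^2) ^ (-(p⁻¹.toReal/2)))
              * ((1 + y^2) ^ (-((2 - p⁻¹.toReal)/(2*k)))) ^ (1 + k)) x
          = deriv (deriv (fun y : ℝ => (1 + y^2) ^ (-((2 - p⁻¹.toReal)/(2*k))))) x) := by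
  refine ⟨fun p _ k hk hkt => ?_, fun p hp k hk hkt => ?_⟩
  · set t := p⁻¹.toReal
    have ht0 : 0 ≤ t := ENNReal.toReal_nonneg
    have ha : 0 < (1 - t) / k := div_pos (by linarith) hk
    refine ⟨integrable_one_add_sq_rpow_neg ?_, ?_, fun x => ?_⟩
    · rw [lt_div_iff₀ (by positivity)]; linarith
    · exact lorentzNorm_top_ne_top_of_abs_le_mul_abs_rpow (abs_pos.2 ha.ne') (by linarith)
        fun x hx => abs_drift_le ht0 hx
    · rw [drift_mul_rpow_eq_deriv (by field_simp) (by field_simp; ring)]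
  · set t := p⁻¹.toReal
    have ht0 : 0 ≤ t := ENNReal.toReal_nonneg
    have ht1 : t < 1 := ENNReal.toReal_lt_of_lt_ofReal (by simpa using ENNReal.inv_lt_one.2 hp)
    have ha : 0 < (2 - t) / k := div_pos (by linarith) hk
    refine ⟨integrable_one_add_sq_rpow_neg ?_, ?_, fun x => ?_⟩
    · rw [lt_div_iff₀ (by positivity)]; linarith
    · exact lorentzNorm_top_ne_top_of_abs_le_mul_abs_rpow (abs_pos.2 ha.ne') ht1
        fun x hx => abs_deriv_drift_le ht0 ht1.le hx
    · rw [drift_mul_rpow_eq_deriv (by field_simp) (by field_simp; ring)]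
end
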